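/- (Lemma A.1, first bound.) In the smoothing spline truncation setting, the coefficient vectors satisfy ‖c̃ − c‖² ≤ ζ₁ B B̃ ‖Σ̃ − Σ‖_F². -/

import Mathlib

/-!
Write `a = nλ`. Since `Tᵀc = 0` and `T = Q₁R` with `R` invertible, `Q₁ᵀc = 0`, so `c = Q₂z` with
`z = Q₂ᵀc`, and projecting the system with `Q₂ᵀ` (which kills `T`) gives `(Q₂ᵀΣQ₂ + aI)z = Q₂ᵀy`;
likewise `c̃ = Q₂z̃`. Subtracting, `(Q₂ᵀΣ̃Q₂ + aI)(z̃ - z) = Q₂ᵀ(Σ - Σ̃)Q₂ z`. Diagonalizing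
orthogonally, a positive definite `M` with eigenvalues `μₖ` satisfies
`‖x‖² ≤ (∑ₖ μₖ⁻²) ‖(M + aI)x‖²` for `a ≥ 0`, and the Frobenius norm is submultiplicative and
dominates the operator norm; chaining these estimates gives the bound.
-/

open Matrix BigOperators

/-- Squared Frobenius norm of a real matrix. -/
noncomputable def frobSq {m n : ℕ} (M : Matrix (Fin m) (Fin n) ℝ) : ℝ :=
  ∑ i, ∑ j, (M i j) ^ 2

/-- Squared Euclidean norm of a real vector. -/
noncomputable def vnormSq {m : ℕ} (v : Fin m → ℝ) : ℝ := ∑ i, (v i) ^ 2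

lemma vnormSq_nonneg {m : ℕ} (v : Fin m → ℝ) : 0 ≤ vnormSq v :=
  Finset.sum_nonneg fun _ _ => sq_nonneg _

lemma frobSq_nonneg {m n : ℕ} (M : Matrix (Fin m) (Fin n) ℝ) : 0 ≤ frobSq M :=
  Finset.sum_nonneg fun _ _ => Finset.sum_nonneg fun _ _ => sq_nonneg _

lemma frobSq_transpose {m n : ℕ} (M : Matrix (Fin m) (Fin n) ℝ) : frobSq Mᵀ = frobSq M := by
  rw [frobSq, frobSq, Finset.sum_comm]
  rfl

lemma frobSq_sub_comm {m n : ℕ} (M N : Matrix (Fin m) (Fin n) ℝ) :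
    frobSq (M - N) = frobSq (N - M) := by
  refine Finset.sum_congr rfl fun i _ => Finset.sum_congr rfl fun j _ => ?_
  rw [Matrix.sub_apply, Matrix.sub_apply]
  ring

lemma vnormSq_mulVec_le {m n : ℕ} (M : Matrix (Fin m) (Fin n) ℝ) (v : Fin n → ℝ) :
    vnormSq (M *ᵥ v) ≤ frobSq M * vnormSq v := by
  simp only [vnormSq, frobSq, mulVec, dotProduct]
  rw [Finset.sum_mul]
  exact Finset.sum_le_sum fun i _ => Finset.sum_mul_sq_le_sq_mul_sq Finset.univ (M i) v

lemma frobSq_mul_le {m n k : ℕ} (A : Matrix (Fin m) (Fin n) ℝ) (B : Matrix (Fin n) (Fin k) ℝ) :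
    frobSq (A * B) ≤ frobSq A * frobSq B := by
  calc frobSq (A * B)
      ≤ ∑ i, ∑ j, (∑ l, A i l ^ 2) * (∑ l, B l j ^ 2) := by
        refine Finset.sum_le_sum fun i _ => Finset.sum_le_sum fun j _ => ?_
        rw [mul_apply]
        exact Finset.sum_mul_sq_le_sq_mul_sq _ _ _
    _ = frobSq A * frobSq Bᵀ := by rw [frobSq, frobSq, Finset.sum_mul_sum]; rfl
    _ = frobSq A * frobSq B := by rw [frobSq_transpose]

lemma frobSq_transpose_mul_mul_le {m n : ℕ} (A : Matrix (Fin m) (Fin n) ℝ)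
    (M : Matrix (Fin m) (Fin m) ℝ) : frobSq (Aᵀ * M * A) ≤ frobSq A ^ 2 * frobSq M := by
  calc frobSq (Aᵀ * M * A) ≤ frobSq Aᵀ * frobSq M * frobSq A :=
        (frobSq_mul_le _ _).trans <|
          mul_le_mul_of_nonneg_right (frobSq_mul_le _ _) (frobSq_nonneg _)
    _ = frobSq A ^ 2 * frobSq M := by rw [frobSq_transpose]; ring

lemma vnormSq_eq_dotProduct {m : ℕ} (v : Fin m → ℝ) : vnormSq v = v ⬝ᵥ v := by
  simp only [vnormSq, dotProduct, sq]

lemma vnormSq_transpose_mulVec {m : ℕ} {V : Matrix (Fin m) (Fin m) ℝ} (hV : V * Vᵀ = 1)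
    (x : Fin m → ℝ) : vnormSq (Vᵀ *ᵥ x) = vnormSq x := by
  rw [vnormSq_eq_dotProduct, vnormSq_eq_dotProduct, dotProduct_mulVec, vecMul_transpose,
    mulVec_mulVec, hV, one_mulVec]

lemma vnormSq_le_of_mulVec_eq_of_diagonalize {m : ℕ} {A V : Matrix (Fin m) (Fin m) ℝ}
    {μ : Fin m → ℝ} (hV : V * Vᵀ = 1) (hdiag : Vᵀ * A * V = diagonal μ) (hμ : ∀ k, μ k ≠ 0)
    {x u : Fin m → ℝ} (hx : A *ᵥ x = u) :
    vnormSq x ≤ (∑ k, (μ k ^ 2)⁻¹) * vnormSq u := by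
  set x' := Vᵀ *ᵥ x
  set u' := Vᵀ *ᵥ u
  have hdiag_eq : diagonal μ *ᵥ x' = u' := by
    rw [← hdiag, mulVec_mulVec, Matrix.mul_assoc (Vᵀ * A), hV, Matrix.mul_one, ← mulVec_mulVec,
      hx]
  have hcoord : ∀ k, x' k ^ 2 = (μ k ^ 2)⁻¹ * u' k ^ 2 := fun k => by
    rw [← congrFun hdiag_eq k, mulVec_diagonal, mul_pow,
      inv_mul_cancel_left₀ (pow_ne_zero 2 (hμ k))]
  calc vnormSq x = ∑ k, (μ k ^ 2)⁻¹ * u' k ^ 2 := by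
        rw [← vnormSq_transpose_mulVec hV x, vnormSq]
        exact Finset.sum_congr rfl fun k _ => hcoord k
    _ ≤ ∑ k, (μ k ^ 2)⁻¹ * vnormSq u' :=
        Finset.sum_le_sum fun k _ => mul_le_mul_of_nonneg_left
          (Finset.single_le_sum (fun i _ => sq_nonneg (u' i)) (Finset.mem_univ k)) (by positivity)
    _ = (∑ k, (μ k ^ 2)⁻¹) * vnormSq u := by
        rw [← Finset.sum_mul, vnormSq_transpose_mulVec hV u]

lemma Matrix.IsHermitian.exists_orthogonal_diagonalize {m : ℕ} {A : Matrix (Fin m) (Fin m) ℝ}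
    (hA : A.IsHermitian) :
    ∃ V : Matrix (Fin m) (Fin m) ℝ, V * Vᵀ = 1 ∧ Vᵀ * V = 1 ∧
      Vᵀ * A * V = diagonal hA.eigenvalues := by
  have hdiag := hA.conjStarAlgAut_star_eigenvectorUnitary
  rw [Unitary.conjStarAlgAut_star_apply, RCLike.ofReal_real_eq_id, Function.id_comp] at hdiag
  have hright := mem_unitaryGroup_iff.1 hA.eigenvectorUnitary.2
  have hleft := mem_unitaryGroup_iff'.1 hA.eigenvectorUnitary.2
  generalize (hA.eigenvectorUnitary : Matrix (Fin m) (Fin m) ℝ) = V at hdiag hright hleft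
  rw [star_eq_conjTranspose, conjTranspose_eq_transpose_of_trivial] at hdiag hright hleft
  exact ⟨V, hright, hleft, hdiag⟩

lemma Matrix.PosDef.vnormSq_le_of_add_smul_one_mulVec_eq {m : ℕ} {A : Matrix (Fin m) (Fin m) ℝ}
    (hA : A.PosDef) {a : ℝ} (ha : 0 ≤ a) {x u : Fin m → ℝ} (hx : (A + a • 1) *ᵥ x = u) :
    vnormSq x ≤ (∑ k, (hA.1.eigenvalues k ^ 2)⁻¹) * vnormSq u := by
  obtain ⟨V, hV, hV', hdiag⟩ := hA.1.exists_orthogonal_diagonalize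
  have hdiag_add : Vᵀ * (A + a • 1) * V = diagonal fun k => hA.1.eigenvalues k + a := by
    rw [Matrix.mul_add, Matrix.add_mul, hdiag, Matrix.mul_smul, Matrix.mul_one, Matrix.smul_mul,
      hV', smul_one_eq_diagonal, diagonal_add]
  have hpos := hA.eigenvalues_pos
  refine (vnormSq_le_of_mulVec_eq_of_diagonalize hV hdiag_add
    (fun k => (add_pos_of_pos_of_nonneg (hpos k) ha).ne') hx).trans ?_
  refine mul_le_mul_of_nonneg_right (Finset.sum_le_sum fun k _ => ?_) (vnormSq_nonneg u)
  exact inv_anti₀ (by positivity [hpos k]) (pow_le_pow_left₀ (hpos k).le (by linarith) 2)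

section QR

variable {α : Type*} [CommRing α] {l m o : Type*} [Fintype l] [Fintype m] [Fintype o]
  {Q₁ T : Matrix l m α} {Q₂ : Matrix l o α} {R : Matrix m m α}

lemma transpose_mulVec_eq_zero_of_qr [DecidableEq m] (hR : IsUnit R) (hT : T = Q₁ * R)
    {c : l → α} (hc : Tᵀ *ᵥ c = 0) : Q₁ᵀ *ᵥ c = 0 := by
  have hRT : IsUnit Rᵀ.det := by
    rw [det_transpose]
    exact (isUnit_iff_isUnit_det R).1 hR
  calc Q₁ᵀ *ᵥ c = (Rᵀ⁻¹ * Rᵀ) *ᵥ (Q₁ᵀ *ᵥ c) := by rw [nonsing_inv_mul _ hRT, one_mulVec]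
    _ = Rᵀ⁻¹ *ᵥ (Tᵀ *ᵥ c) := by
        rw [hT, transpose_mul, mulVec_mulVec, mulVec_mulVec, Matrix.mul_assoc]
    _ = 0 := by rw [hc, mulVec_zero]

lemma mulVec_transpose_mulVec_eq_self [DecidableEq l] (hQ : Q₁ * Q₁ᵀ + Q₂ * Q₂ᵀ = 1)
    {c : l → α} (hc : Q₁ᵀ *ᵥ c = 0) : Q₂ *ᵥ (Q₂ᵀ *ᵥ c) = c := by
  rw [mulVec_mulVec, ← zero_add ((Q₂ * Q₂ᵀ) *ᵥ c), ← mulVec_zero Q₁, ← hc, mulVec_mulVec,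
    ← add_mulVec, hQ, one_mulVec]

lemma reduced_system_of_qr [DecidableEq l] [DecidableEq m] [DecidableEq o]
    (hQ₂ : Q₂ᵀ * Q₂ = 1) (hQ₁₂ : Q₁ᵀ * Q₂ = 0)
    (hQ : Q₁ * Q₁ᵀ + Q₂ * Q₂ᵀ = 1) (hR : IsUnit R) (hT : T = Q₁ * R)
    {S : Matrix l l α} {a : α} {y c : l → α} {d : m → α}
    (hcd : T *ᵥ d + (S + a • 1) *ᵥ c = y) (hc : Tᵀ *ᵥ c = 0) :
    (Q₂ᵀ * S * Q₂ + a • 1) *ᵥ (Q₂ᵀ *ᵥ c) = Q₂ᵀ *ᵥ y ∧ Q₂ *ᵥ (Q₂ᵀ *ᵥ c) = c := by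
  have hproj := mulVec_transpose_mulVec_eq_self hQ (transpose_mulVec_eq_zero_of_qr hR hT hc)
  refine ⟨?_, hproj⟩
  have hQ₂T : Q₂ᵀ * T = 0 := by
    rw [hT, ← Matrix.mul_assoc, ← transpose_transpose Q₁, ← transpose_mul, hQ₁₂,
      transpose_zero, Matrix.zero_mul]
  have hconj : Q₂ᵀ * S * Q₂ + a • 1 = Q₂ᵀ * (S + a • 1) * Q₂ := by
    rw [Matrix.mul_add, Matrix.add_mul, Matrix.mul_smul, Matrix.mul_one, Matrix.smul_mul, hQ₂]
  calc (Q₂ᵀ * S * Q₂ + a • 1) *ᵥ (Q₂ᵀ *ᵥ c)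
      = Q₂ᵀ *ᵥ ((S + a • 1) *ᵥ (Q₂ *ᵥ (Q₂ᵀ *ᵥ c))) := by
        rw [hconj]
        simp only [mulVec_mulVec, Matrix.mul_assoc]
    _ = Q₂ᵀ *ᵥ (T *ᵥ d + (S + a • 1) *ᵥ c) := by
        rw [hproj, mulVec_add, mulVec_mulVec (v := d), hQ₂T, zero_mulVec, zero_add]
    _ = Q₂ᵀ *ᵥ y := by rw [hcd]

end QR

theorem stmt4_general (n p : ℕ)
    (y : Fin n → ℝ) (lam : ℝ) (hlam : 0 < lam)
    (T Q₁ : Matrix (Fin n) (Fin p) ℝ) (Q₂ : Matrix (Fin n) (Fin (n - p)) ℝ)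
    (R : Matrix (Fin p) (Fin p) ℝ)
    (hQ₂ : Q₂ᵀ * Q₂ = 1) (hQ₁₂ : Q₁ᵀ * Q₂ = 0)
    (hQ : Q₁ * Q₁ᵀ + Q₂ * Q₂ᵀ = 1)
    (hR : IsUnit R) (hT : T = Q₁ * R)
    (S St : Matrix (Fin n) (Fin n) ℝ)
    (hpd : (Q₂ᵀ * S * Q₂).PosDef) (hpdt : (Q₂ᵀ * St * Q₂).PosDef)
    (c : Fin n → ℝ) (d : Fin p → ℝ)
    (hcd : T *ᵥ d + (S + ((n : ℝ) * lam) • 1) *ᵥ c = y) (hc0 : Tᵀ *ᵥ c = 0)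
    (ct : Fin n → ℝ) (dt : Fin p → ℝ)
    (hcdt : T *ᵥ dt + (St + ((n : ℝ) * lam) • 1) *ᵥ ct = y) (hct0 : Tᵀ *ᵥ ct = 0) :
    vnormSq (ct - c) ≤
      ((frobSq Q₂) ^ 3 * vnormSq (Q₂ᵀ *ᵥ y)) *
        (∑ k, ((hpd.1.eigenvalues k) ^ 2)⁻¹) *
        (∑ k, ((hpdt.1.eigenvalues k) ^ 2)⁻¹) *
        frobSq (St - S) := by
  have ha : 0 ≤ (n : ℝ) * lam := by positivity
  obtain ⟨hz, hc⟩ := reduced_system_of_qr hQ₂ hQ₁₂ hQ hR hT hcd hc0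
  obtain ⟨hzt, hct⟩ := reduced_system_of_qr hQ₂ hQ₁₂ hQ hR hT hcdt hct0
  set z := Q₂ᵀ *ᵥ c
  set zt := Q₂ᵀ *ᵥ ct
  have hdiff :
      (Q₂ᵀ * St * Q₂ + ((n : ℝ) * lam) • 1) *ᵥ (zt - z) = (Q₂ᵀ * (S - St) * Q₂) *ᵥ z := by
    rw [mulVec_sub, hzt, ← hz, ← sub_mulVec, add_sub_add_right_eq_sub, Matrix.mul_sub,
      Matrix.sub_mul]
  calc vnormSq (ct - c) = vnormSq (Q₂ *ᵥ (zt - z)) := by rw [mulVec_sub, hc, hct]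
    _ ≤ frobSq Q₂ * vnormSq (zt - z) := vnormSq_mulVec_le _ _
    _ ≤ frobSq Q₂ * ((∑ k, (hpdt.1.eigenvalues k ^ 2)⁻¹) *
          (frobSq (Q₂ᵀ * (S - St) * Q₂) * vnormSq z)) := by
        gcongr
        · exact frobSq_nonneg _
        · exact (hpdt.vnormSq_le_of_add_smul_one_mulVec_eq ha hdiff).trans
            (by gcongr; exact vnormSq_mulVec_le _ _)
    _ ≤ frobSq Q₂ * ((∑ k, (hpdt.1.eigenvalues k ^ 2)⁻¹) *
          ((frobSq Q₂ ^ 2 * frobSq (S - St)) *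
            ((∑ k, (hpd.1.eigenvalues k ^ 2)⁻¹) * vnormSq (Q₂ᵀ *ᵥ y)))) := by
        gcongr frobSq Q₂ * (_ * ?_)
        · exact frobSq_nonneg _
        · exact mul_le_mul (frobSq_transpose_mul_mul_le _ _)
            (hpd.vnormSq_le_of_add_smul_one_mulVec_eq ha hz) (vnormSq_nonneg _)
            (mul_nonneg (pow_nonneg (frobSq_nonneg _) 2) (frobSq_nonneg _))
    _ = _ := by rw [frobSq_sub_comm]; ring

/-- Lemma A.1, first bound: in the smoothing spline truncation setting,
`‖c̃ − c‖² ≤ ζ₁ B B̃ ‖Σ̃ − Σ‖_F²` where `ζ₁ = ‖Q₂‖_F⁶ ‖Q₂ᵀ y‖²`,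
`B = Σ_k λ_{k,n}⁻²`, `B̃ = Σ_k λ̃_{k,n}⁻²`. -/
theorem stmt4 (n p : ℕ) (hp : 1 ≤ p) (hpn : p < n)
    (y : Fin n → ℝ) (lam : ℝ) (hlam : 0 < lam)
    (T Q₁ : Matrix (Fin n) (Fin p) ℝ) (Q₂ : Matrix (Fin n) (Fin (n - p)) ℝ)
    (R : Matrix (Fin p) (Fin p) ℝ)
    (hQ₁ : Q₁ᵀ * Q₁ = 1) (hQ₂ : Q₂ᵀ * Q₂ = 1) (hQ₁₂ : Q₁ᵀ * Q₂ = 0)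
    (hQ : Q₁ * Q₁ᵀ + Q₂ * Q₂ᵀ = 1)
    (hR : IsUnit R) (hRtri : R.BlockTriangular id) (hT : T = Q₁ * R)
    (K : ℕ) (hK : 1 ≤ K) (κ : ℝ) (hκ : 0 < κ)
    (δ : ℕ → ℝ) (hδ0 : ∀ k, 0 ≤ δ k) (hδmono : ∀ k, δ (k + 1) ≤ δ k) (hδsum : Summable δ)
    (U : Fin n → ℕ → ℝ) (hU : ∀ i k, |U i k| ≤ κ)
    (S St : Matrix (Fin n) (Fin n) ℝ)
    (hS : ∀ i j, S i j = ∑' k, δ k * U i k * U j k)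
    (hSt : ∀ i j, St i j = ∑ k ∈ Finset.range K, δ k * U i k * U j k)
    (hSpsd : S.PosSemidef) (hStpsd : St.PosSemidef)
    (hpd : (Q₂ᵀ * S * Q₂).PosDef) (hpdt : (Q₂ᵀ * St * Q₂).PosDef)
    (c : Fin n → ℝ) (d : Fin p → ℝ)
    (hcd : T *ᵥ d + (S + ((n : ℝ) * lam) • 1) *ᵥ c = y) (hc0 : Tᵀ *ᵥ c = 0)
    (ct : Fin n → ℝ) (dt : Fin p → ℝ)
    (hcdt : T *ᵥ dt + (St + ((n : ℝ) * lam) • 1) *ᵥ ct = y) (hct0 : Tᵀ *ᵥ ct = 0) :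
    vnormSq (ct - c) ≤
      ((frobSq Q₂) ^ 3 * vnormSq (Q₂ᵀ *ᵥ y)) *
        (∑ k, ((hpd.1.eigenvalues k) ^ 2)⁻¹) *
        (∑ k, ((hpdt.1.eigenvalues k) ^ 2)⁻¹) *
        frobSq (St - S) :=
  stmt4_general n p y lam hlam T Q₁ Q₂ R hQ₂ hQ₁₂ hQ hR hT S St hpd hpdt c d hcd hc0 ct dt hcdt hct0
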